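/- Let P be a partial quiver of type A_n or P = j ∈ [1,n], let x be a point of D(P) carrying label m ≥ 2, and let S(x) = S_1(x) ∪ S_2(x). Then for every d with m < d ≤ n+1, the roots α_{m−1, d} and α_{m, d} do not both belong to S(x). -/

import Mathlib

/-!
Common definitions: type `A_n` combinatorics of reduced words for the longest
element, partial quivers, chamber sets, Lusztig cones, the rectangle diagrams
`D(P)` and `D(j)`, the sets `S(P)`, `S(j)`, `S(x)`, and Reineke's description
of Kashiwara's operators.
-/

noncomputable section

namespace Paper

attribute [local instance] Classical.propDecidable

/-! ### Partial quivers of type `A_n` -/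

/-- Edge symbols of a partial quiver: leftward arrow, rightward arrow, undirected. -/
inductive PQSym : Type
  | L : PQSym
  | R : PQSym
  | N : PQSym
deriving DecidableEq

/-- A partial quiver of type `A_n`: symbols on the edges `2, …, n` (numbered from the
right-hand end), with the directed edges forming a nonempty interval. -/
structure PartialQuiver (n : ℕ) : Type where
  edge : ℕ → PQSym
  undirected_outside : ∀ j : ℕ, j < 2 ∨ n < j → edge j = PQSym.N
  directed_nonempty : ∃ j : ℕ, edge j ≠ PQSym.N
  directed_interval : ∀ j j' j'' : ℕ, j ≤ j' → j' ≤ j'' →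
    edge j ≠ PQSym.N → edge j'' ≠ PQSym.N → edge j' ≠ PQSym.N

/-- A quiver: a partial quiver with no undirected edge. -/
def IsQuiver (n : ℕ) (Q : PartialQuiver n) : Prop :=
  ∀ j : ℕ, 2 ≤ j → j ≤ n → Q.edge j ≠ PQSym.N

/-- `P ≤ Q` : every directed edge of `P` carries the same symbol in `Q`. -/
def PQle (n : ℕ) (P Q : PartialQuiver n) : Prop :=
  ∀ j : ℕ, P.edge j ≠ PQSym.N → Q.edge j = P.edge j

/-- The edges `lo, lo+1, …, hi` form a component of `P` (a maximal run of equally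
oriented directed edges).  Its type is `P.edge lo`, and `a(Y) = lo - 1`,
`b(Y) = hi + 1`. -/
def IsComp (n : ℕ) (P : PartialQuiver n) (lo hi : ℕ) : Prop :=
  2 ≤ lo ∧ lo ≤ hi ∧ hi ≤ n ∧ P.edge lo ≠ PQSym.N ∧
    (∀ j : ℕ, lo ≤ j → j ≤ hi → P.edge j = P.edge lo) ∧
    P.edge (lo - 1) ≠ P.edge lo ∧ P.edge (hi + 1) ≠ P.edge lo

/-- The chamber set `l(P) ⊆ [1, n+1]` of a partial quiver:
`l₁(P) = {j : edge j is an L}`, `l₂(P) = [1, p-1]` if the rightmost directed edge is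
an `R` at position `p`, `l₃(P) = [q+1, n+1]` if the leftmost directed edge is an `R`
at position `q`. -/
def lset (n : ℕ) (P : PartialQuiver n) : Finset ℕ :=
  (Finset.Icc 1 (n + 1)).filter (fun m =>
    P.edge m = PQSym.L ∨
    (∃ p ∈ Finset.Icc 2 n, P.edge p = PQSym.R ∧
      (∀ q ∈ Finset.Icc 2 n, q < p → P.edge q = PQSym.N) ∧ m < p) ∨
    (∃ q ∈ Finset.Icc 2 n, P.edge q = PQSym.R ∧
      (∀ p' ∈ Finset.Icc 2 n, q < p' → P.edge p' = PQSym.N) ∧ q < m))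

/-! ### Reduced words for the longest element, positive roots, chamber sets -/

/-- The Coxeter generator `s_i`, acting as the transposition `(i, i+1)` of `ℕ`. -/
def sRefl (i : ℕ) : Equiv.Perm ℕ := Equiv.swap i (i + 1)

/-- The product `s_{i_1} s_{i_2} ⋯ s_{i_k}` of a word. -/
def wordProd (w : List ℕ) : Equiv.Perm ℕ := (w.map sRefl).prod

/-- `w` is a reduced expression for the longest element `w₀` of `W(A_n) = S_{n+1}`:
its letters lie in `[1,n]`, it has length `n(n+1)/2`, and its product is the
permutation `m ↦ n + 2 - m` of `[1, n+1]`. -/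
def IsRedWordW0 (n : ℕ) (w : List ℕ) : Prop :=
  (∀ i ∈ w, 1 ≤ i ∧ i ≤ n) ∧ w.length = n * (n + 1) / 2 ∧
    ∀ m : ℕ, 1 ≤ m → m ≤ n + 1 → wordProd w m = n + 2 - m

/-- The letter `i_r` of `w` (positions numbered from `1`). -/
def letterAt (w : List ℕ) (r : ℕ) : ℕ := w.getD (r - 1) 0

/-- The `r`-th positive root `α^r = s_{i_1} ⋯ s_{i_{r-1}} (α_{i_r})` determined by `w`,
recorded as the pair `(c, d)` with `c < d` for `α_{cd} = α_c + ⋯ + α_{d-1}`. -/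
def rootAt (w : List ℕ) (r : ℕ) : ℕ × ℕ :=
  (min (wordProd (w.take (r - 1)) (letterAt w r))
       (wordProd (w.take (r - 1)) (letterAt w r + 1)),
   max (wordProd (w.take (r - 1)) (letterAt w r))
       (wordProd (w.take (r - 1)) (letterAt w r + 1)))

/-- The chamber sets of the chamber diagram `CD(w)`: bounded chambers correspond to
minimal pairs `r < r'` (equal letters with no equal letter in between); the chamber
set of such a chamber is the set of strings passing below it, namely
`{(s_{i_1} ⋯ s_{i_r})(m) : i_r < m ≤ n+1}`. -/
def chamberSets (n : ℕ) (w : List ℕ) : Set (Finset ℕ) :=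
  { S | ∃ r r' : ℕ, 1 ≤ r ∧ r < r' ∧ r' ≤ w.length ∧ letterAt w r' = letterAt w r ∧
      (∀ p : ℕ, r < p → p < r' → letterAt w p ≠ letterAt w r) ∧
      S = (Finset.Icc (letterAt w r + 1) (n + 1)).image (wordProd (w.take r)) }

/-! ### The multisets `M(P)`, `M(j)` and the spanning vectors `v_P`, `v_j` -/

/-- The number `m_{cd}` of components `Y` of `P` with `α_{cd} ∈ M(Y)`, where
`M(Y) = {α_{cd} : 1 ≤ c ≤ a(Y) ≤ b(Y) ≤ d ≤ n+1}`. -/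
def compCount (n : ℕ) (P : PartialQuiver n) (c d : ℕ) : ℕ :=
  ((Finset.Icc 2 n ×ˢ Finset.Icc 2 n).filter (fun lh =>
    IsComp n P lh.1 lh.2 ∧ 1 ≤ c ∧ c ≤ lh.1 - 1 ∧ lh.2 + 1 ≤ d ∧ d ≤ n + 1)).card

/-- The multiplicity `⌈m_{cd}/2⌉` of `α_{cd}` in the multiset `M(P)`. -/
def multMP (n : ℕ) (P : PartialQuiver n) (c d : ℕ) : ℕ := (compCount n P c d + 1) / 2

/-- The spanning vector `v_P(w)`: its `r`-th entry is the multiplicity of `α^r` in `M(P)`. -/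
def vP (n : ℕ) (w : List ℕ) (P : PartialQuiver n) (r : ℕ) : ℕ :=
  if 1 ≤ r ∧ r ≤ w.length then multMP n P (rootAt w r).1 (rootAt w r).2 else 0

/-- The spanning vector `v_j(w)`: its `r`-th entry is the multiplicity of `α^r` in
`M(j) = {α_{cd} : c ≤ j < j+1 ≤ d}`. -/
def vj (n : ℕ) (w : List ℕ) (j r : ℕ) : ℕ :=
  if 1 ≤ r ∧ r ≤ w.length ∧ (rootAt w r).1 ≤ j ∧ j + 1 ≤ (rootAt w r).2 then 1 else 0

/-- The Lusztig cone `C_w ⊆ ℕ^k` (entries indexed by positions `1, …, k`). -/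
def LusztigCone (n : ℕ) (w : List ℕ) : Set (ℕ → ℕ) :=
  { a | (∀ r : ℕ, r = 0 ∨ w.length < r → a r = 0) ∧
      ∀ s s' : ℕ, 1 ≤ s → s < s' → s' ≤ w.length → letterAt w s' = letterAt w s →
        (∀ p : ℕ, s < p → p < s' → letterAt w p ≠ letterAt w s) →
        a s + a s' ≤ ∑ p ∈ (Finset.Ioo s s').filter
          (fun p => letterAt w p = letterAt w s + 1 ∨ letterAt w s = letterAt w p + 1), a p }

/-- A single commutation move: interchange adjacent letters `p, q` with `|p - q| > 1`. -/
def CommMove (w w' : List ℕ) : Prop :=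
  ∃ (u v : List ℕ) (p q : ℕ), (p + 1 < q ∨ q + 1 < p) ∧
    w = u ++ p :: q :: v ∧ w' = u ++ q :: p :: v

/-! ### Compatibility of a reduced word with a quiver -/

def flipSym : PQSym → PQSym
  | PQSym.L => PQSym.R
  | PQSym.R => PQSym.L
  | PQSym.N => PQSym.N

/-- Reverse all arrows incident to the vertex `v` (these are the edges `v` and `v+1`). -/
def reverseAt (Q : ℕ → PQSym) (v : ℕ) : ℕ → PQSym :=
  fun j => if j = v ∨ j = v + 1 then flipSym (Q j) else Q j

/-- The vertex `v ∈ [1,n]` is a sink (all incident arrows point into `v`). -/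
def IsSinkF (n : ℕ) (Q : ℕ → PQSym) (v : ℕ) : Prop :=
  1 ≤ v ∧ v ≤ n ∧ (2 ≤ v → Q v = PQSym.L) ∧ (v + 1 ≤ n → Q (v + 1) = PQSym.R)

def CompatibleAux (n : ℕ) : List ℕ → (ℕ → PQSym) → Prop
  | [], _ => True
  | i :: rest, Q => IsSinkF n Q i ∧ CompatibleAux n rest (reverseAt Q i)

/-- `w` is compatible with the quiver `Q`: `i_1` is a sink of `Q` and the rest of `w`
is compatible with the quiver obtained by reversing all arrows incident to `i_1`. -/
def Compatible (n : ℕ) (w : List ℕ) (Q : PartialQuiver n) : Prop :=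
  CompatibleAux n w Q.edge

/-! ### The piecewise-linear maps `T₂`, `T₃` -/

def T2 (x : ℕ × ℕ) : ℕ × ℕ := (x.2, x.1)

def T3 (x : ℤ × ℤ × ℤ) : ℤ × ℤ × ℤ :=
  (max x.2.2 (x.2.1 - x.1), x.1 + x.2.2, min x.1 (x.2.1 - x.2.2))

/-! ### The diagram `D(P)` -/

/-- The point `T + u·(-1,-1) + v·(1,-1)` of a rectangle with top corner `T`. -/
def rectPt (T : ℤ × ℤ) (u v : ℕ) : ℤ × ℤ :=
  (T.1 - (u : ℤ) + (v : ℤ), T.2 - (u : ℤ) - (v : ℤ))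

/-- `Tc` assigns to each component `(lo,hi)` of `P` the top corner of its rectangle
`ρ(Y)` (which has `a = lo - 1` rows in direction `(-1,-1)` and `n + 2 - b = n + 1 - hi`
columns in direction `(1,-1)`), so that whenever a component of type `L` is immediately
followed (on the right, i.e. at lower edge numbers) by one of type `R` their leftmost
corners coincide, and whenever one of type `R` is immediately followed by one of type
`L` their rightmost corners coincide. -/
def IsRealization (n : ℕ) (P : PartialQuiver n) (Tc : ℕ × ℕ → ℤ × ℤ) : Prop :=
  ∀ lo hi lo' hi' : ℕ, IsComp n P lo hi → IsComp n P lo' hi' → hi' + 1 = lo →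
    (P.edge lo = PQSym.L →
      rectPt (Tc (lo, hi)) (lo - 2) 0 = rectPt (Tc (lo', hi')) (lo' - 2) 0) ∧
    (P.edge lo = PQSym.R →
      rectPt (Tc (lo, hi)) 0 (n - hi) = rectPt (Tc (lo', hi')) 0 (n - hi'))

/-- `x` belongs to the rectangle of the component `(lo,hi)`. -/
def InRect (n : ℕ) (Tc : ℕ × ℕ → ℤ × ℤ) (lo hi : ℕ) (x : ℤ × ℤ) : Prop :=
  ∃ u v : ℕ, u ≤ lo - 2 ∧ v ≤ n - hi ∧ x = rectPt (Tc (lo, hi)) u v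

/-- The set of points of the diagram `D(P)`. -/
def pointsD (n : ℕ) (P : PartialQuiver n) (Tc : ℕ × ℕ → ℤ × ℤ) : Finset (ℤ × ℤ) :=
  ((Finset.Icc 2 n ×ˢ Finset.Icc 2 n).filter (fun lh => IsComp n P lh.1 lh.2)).biUnion
    (fun lh => (Finset.range (lh.1 - 1) ×ˢ Finset.range (n + 1 - lh.2)).image
      (fun uv => rectPt (Tc lh) uv.1 uv.2))

/-- The label of the top corner of the rectangle of `(lo,hi)`: `1` for type `L`,
`b - a = hi - lo + 2` for type `R`. -/
def baseOf (n : ℕ) (P : PartialQuiver n) (lo hi : ℕ) : ℕ :=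
  if P.edge lo = PQSym.L then 1 else hi - lo + 2

/-- The point `x` of `D(P)` carries the label `m`. -/
def HasLabel (n : ℕ) (P : PartialQuiver n) (Tc : ℕ × ℕ → ℤ × ℤ) (x : ℤ × ℤ) (m : ℕ) : Prop :=
  ∃ lo hi u v : ℕ, IsComp n P lo hi ∧ u ≤ lo - 2 ∧ v ≤ n - hi ∧
    x = rectPt (Tc (lo, hi)) u v ∧ m = baseOf n P lo hi + u + v

/-- The label of a point of `D(P)` (labels from different rectangles agree). -/
def labelD (n : ℕ) (P : PartialQuiver n) (Tc : ℕ × ℕ → ℤ × ℤ) (x : ℤ × ℤ) : ℕ :=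
  sInf { m | HasLabel n P Tc x m }

/-- The multiplicity `⌈t/2⌉` of a point, `t` being the number of rectangles containing it. -/
def multD (n : ℕ) (P : PartialQuiver n) (Tc : ℕ × ℕ → ℤ × ℤ) (x : ℤ × ℤ) : ℕ :=
  (((Finset.Icc 2 n ×ˢ Finset.Icc 2 n).filter (fun lh =>
      IsComp n P lh.1 lh.2 ∧ InRect n Tc lh.1 lh.2 x)).card + 1) / 2

/-- Diagonal rows of `D(P)` run in direction `(1,-1)`; they are the level sets of the key. -/
def keyOf (x : ℤ × ℤ) : ℤ := x.1 + x.2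

def maxKey (n : ℕ) (P : PartialQuiver n) (Tc : ℕ × ℕ → ℤ × ℤ) : ℤ :=
  ((pointsD n P Tc).image keyOf).max.unbotD 0

def minKey (n : ℕ) (P : PartialQuiver n) (Tc : ℕ × ℕ → ℤ × ℤ) : ℤ :=
  ((pointsD n P Tc).image keyOf).min.untopD 0

def maxX (n : ℕ) (P : PartialQuiver n) (Tc : ℕ × ℕ → ℤ × ℤ) : ℤ :=
  ((pointsD n P Tc).image Prod.fst).max.unbotD 0

def minX (n : ℕ) (P : PartialQuiver n) (Tc : ℕ × ℕ → ℤ × ℤ) : ℤ :=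
  ((pointsD n P Tc).image Prod.fst).min.untopD 0

def keyT (Tc : ℕ × ℕ → ℤ × ℤ) (lo hi : ℕ) : ℤ := keyOf (Tc (lo, hi))

def dT (Tc : ℕ × ℕ → ℤ × ℤ) (lo hi : ℕ) : ℤ := (Tc (lo, hi)).1 - (Tc (lo, hi)).2

/-- `c` is the key of a diagonal row of `D(P)`. -/
def IsCellRow (n : ℕ) (P : PartialQuiver n) (Tc : ℕ × ℕ → ℤ × ℤ) (c : ℤ) : Prop :=
  ∃ x ∈ pointsD n P Tc, keyOf x = c

/-- The rectangle of the component `(lo,hi)` meets the diagonal row with key `c`. -/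
def CoversRow (n : ℕ) (P : PartialQuiver n) (Tc : ℕ × ℕ → ℤ × ℤ) (lo hi : ℕ) (c : ℤ) : Prop :=
  IsComp n P lo hi ∧ keyT Tc lo hi - 2 * ((lo : ℤ) - 2) ≤ c ∧ c ≤ keyT Tc lo hi

/-- The lines in direction `(-1,-1)` bounding the rectangles which meet the diagonal
row with key `c` (recorded by their invariant `x - y`, offset by `±1` from the points). -/
def dEdges (n : ℕ) (P : PartialQuiver n) (Tc : ℕ × ℕ → ℤ × ℤ) (c : ℤ) : Finset ℤ :=
  ((Finset.Icc 2 n ×ˢ Finset.Icc 2 n).filter (fun lh => CoversRow n P Tc lh.1 lh.2 c)).biUnion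
    (fun lh => {dT Tc lh.1 lh.2 - 1, dT Tc lh.1 lh.2 + 2 * ((n : ℤ) - (lh.2 : ℤ)) + 1})

/-- The number of boxes in the row of boxes through the diagonal row with key `c`. -/
def boxCount (n : ℕ) (P : PartialQuiver n) (Tc : ℕ × ℕ → ℤ × ℤ) (c : ℤ) : ℕ :=
  (dEdges n P Tc c).card - 1

/-- `z` is (the key of) the central line `Z` of `D(P)`: it separates the diagonal rows
whose rows of boxes have box-numbers of one parity from those of the other parity. -/
def IsCentralLine (n : ℕ) (P : PartialQuiver n) (Tc : ℕ × ℕ → ℤ × ℤ) (z : ℤ) : Prop :=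
  minKey n P Tc < z ∧ z < maxKey n P Tc ∧
  (∀ c : ℤ, IsCellRow n P Tc c → c ≠ z) ∧
  (∀ c c' : ℤ, IsCellRow n P Tc c → IsCellRow n P Tc c' → z < c → z < c' →
    (Even (boxCount n P Tc c) ↔ Even (boxCount n P Tc c'))) ∧
  (∀ c c' : ℤ, IsCellRow n P Tc c → IsCellRow n P Tc c' → c < z → c' < z →
    (Even (boxCount n P Tc c) ↔ Even (boxCount n P Tc c'))) ∧
  (∀ c c' : ℤ, IsCellRow n P Tc c → IsCellRow n P Tc c' → c < z → z < c' →
    ¬ (Even (boxCount n P Tc c) ↔ Even (boxCount n P Tc c')))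

/-- `x` lies in `ρ*(Y)`: the part of the rectangle of `Y = (lo,hi)` on the same side
of the central line as its labelled corner (the rightmost corner for type `L`, the
leftmost corner for type `R`). -/
def InRhoStar (n : ℕ) (P : PartialQuiver n) (Tc : ℕ × ℕ → ℤ × ℤ) (z : ℤ)
    (lo hi : ℕ) (x : ℤ × ℤ) : Prop :=
  InRect n Tc lo hi x ∧
    (P.edge lo = PQSym.L → (z < keyOf x ↔ z < keyT Tc lo hi)) ∧
    (P.edge lo = PQSym.R → (z < keyOf x ↔ z < keyT Tc lo hi - 2 * ((lo : ℤ) - 2)))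

/-- The root `α_{cd}` arises from the component `Y = (lo,hi)` and the diagonal row with
key `k`: the intersection of that row with `ρ*(Y)` consists exactly of points labelled
`c, c+1, …, d-1` in order from top-left to bottom-right. -/
def ArisesFromY (n : ℕ) (P : PartialQuiver n) (Tc : ℕ × ℕ → ℤ × ℤ) (z : ℤ)
    (lo hi c d : ℕ) (k : ℤ) : Prop :=
  c < d ∧ ∃ p : ℤ × ℤ,
    ({ x : ℤ × ℤ | keyOf x = k ∧ InRhoStar n P Tc z lo hi x } =
      { y : ℤ × ℤ | ∃ t : ℕ, t ≤ d - c - 1 ∧ y = (p.1 + (t : ℤ), p.2 - (t : ℤ)) }) ∧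
    ∀ t : ℕ, t ≤ d - c - 1 → HasLabel n P Tc (p.1 + (t : ℤ), p.2 - (t : ℤ)) (c + t)

/-- The root `α_{cd}` arises from the diagonal row with key `k` (via some component). -/
def ArisesFrom (n : ℕ) (P : PartialQuiver n) (Tc : ℕ × ℕ → ℤ × ℤ) (z : ℤ)
    (c d : ℕ) (k : ℤ) : Prop :=
  ∃ lo hi : ℕ, IsComp n P lo hi ∧ ArisesFromY n P Tc z lo hi c d k

/-- The set `S(Y)` of positive roots of a component. -/
def SY (n : ℕ) (P : PartialQuiver n) (Tc : ℕ × ℕ → ℤ × ℤ) (z : ℤ) (lo hi : ℕ) :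
    Set (ℕ × ℕ) :=
  { cd | ∃ k : ℤ, ArisesFromY n P Tc z lo hi cd.1 cd.2 k }

/-- The set `S(P)` of positive roots. -/
def SP (n : ℕ) (P : PartialQuiver n) (Tc : ℕ × ℕ → ℤ × ℤ) (z : ℤ) : Set (ℕ × ℕ) :=
  { cd | ∃ k : ℤ, ArisesFrom n P Tc z cd.1 cd.2 k }

/-- `S₁(x)` for a point `x` of `D(P)` with label `m`: roots of `S(P)` arising from the
rows strictly above the row of `x`, together with those arising from the row of `x`
of the form `α_{cd}` with `c ≥ m`. -/
def S1x (n : ℕ) (P : PartialQuiver n) (Tc : ℕ × ℕ → ℤ × ℤ) (z : ℤ)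
    (x : ℤ × ℤ) (m : ℕ) : Set (ℕ × ℕ) :=
  { cd | (∃ k : ℤ, keyOf x < k ∧ ArisesFrom n P Tc z cd.1 cd.2 k) ∨
      (ArisesFrom n P Tc z cd.1 cd.2 (keyOf x) ∧ m ≤ cd.1) }

/-- `S₂(x)`: the roots `α_{md}` cut off from roots `α_{c'd} ∈ S(P)` arising from the
row of `x` with `c' < m`. -/
def S2x (n : ℕ) (P : PartialQuiver n) (Tc : ℕ × ℕ → ℤ × ℤ) (z : ℤ)
    (x : ℤ × ℤ) (m : ℕ) : Set (ℕ × ℕ) :=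
  { cd | cd.1 = m ∧ m < cd.2 ∧ ∃ c' : ℕ, c' < m ∧ ArisesFrom n P Tc z c' cd.2 (keyOf x) }

/-- `S(x) = S₁(x) ∪ S₂(x)`. -/
def Sx (n : ℕ) (P : PartialQuiver n) (Tc : ℕ × ℕ → ℤ × ℤ) (z : ℤ)
    (x : ℤ × ℤ) (m : ℕ) : Set (ℕ × ℕ) :=
  S1x n P Tc z x m ∪ S2x n P Tc z x m

/-! ### Reading off the diagram: the sequence `μ(P)` -/

/-- The labels (with multiplicity) of the points of the diagonal row of `D(P)` with key
`k` having `x`-coordinate `≥ xlo`, read from top-left to bottom-right. -/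
def rowListP (n : ℕ) (P : PartialQuiver n) (Tc : ℕ × ℕ → ℤ × ℤ) (k : ℤ) (xlo : ℤ) :
    List ℕ :=
  ((List.range ((maxX n P Tc - minX n P Tc).toNat + 1)).map
      (fun t => minX n P Tc + (t : ℤ))).flatMap
    (fun xx => if xlo ≤ xx ∧ (xx, k - xx) ∈ pointsD n P Tc then
        List.replicate (multD n P Tc (xx, k - xx)) (labelD n P Tc (xx, k - xx)) else [])

/-- The sequence `μ(P)`: the diagonal rows read from the last (bottom left) to the
first (top right), each row from top-left to bottom-right, labels repeated according
to multiplicity. -/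
def muP (n : ℕ) (P : PartialQuiver n) (Tc : ℕ × ℕ → ℤ × ℤ) : List ℕ :=
  ((List.range ((maxKey n P Tc - minKey n P Tc).toNat + 1)).map
      (fun t => minKey n P Tc + (t : ℤ))).flatMap
    (fun k => rowListP n P Tc k (minX n P Tc))

/-- The list of operator indices applied (in order of application) to reach the point
`x`: the rows `1, …, a-1` in turn, each read from its bottom-right end to its top-left
end, then the row of `x` from its bottom-right end up to and including `x`. -/
def opsTo (n : ℕ) (P : PartialQuiver n) (Tc : ℕ × ℕ → ℤ × ℤ) (x : ℤ × ℤ) : List ℕ :=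
  (((List.range (((maxKey n P Tc - keyOf x) / 2).toNat)).map
      (fun t => maxKey n P Tc - 2 * (t : ℤ))).flatMap
    (fun k => (rowListP n P Tc k (minX n P Tc)).reverse)) ++
  (rowListP n P Tc (keyOf x) x.1).reverse

/-- The word whose letters are, for `r = 1, …, k` in order, the letter `i_r` of `w`
repeated `(v_P)_r` times. -/
def FwordP (n : ℕ) (w : List ℕ) (P : PartialQuiver n) : List ℕ :=
  (List.range w.length).flatMap (fun r0 => List.replicate (vP n w P (r0 + 1)) (letterAt w (r0 + 1)))

/-- The word whose letters are, for `r = 1, …, k` in order, the letter `i_r` of `w`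
repeated `(v_j)_r` times. -/
def FwordJ (n : ℕ) (w : List ℕ) (j : ℕ) : List ℕ :=
  (List.range w.length).flatMap (fun r0 => List.replicate (vj n w j (r0 + 1)) (letterAt w (r0 + 1)))

/-! ### The diagram `D(j)`, `j ∈ [1,n]` : a single type `L` rectangle with
`a = j`, `b = j + 1`. -/

def InRectJ (n j : ℕ) (T0 : ℤ × ℤ) (x : ℤ × ℤ) : Prop :=
  ∃ u v : ℕ, u < j ∧ v < n + 1 - j ∧ x = rectPt T0 u v

def pointsDJ (n j : ℕ) (T0 : ℤ × ℤ) : Finset (ℤ × ℤ) :=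
  (Finset.range j ×ˢ Finset.range (n + 1 - j)).image (fun uv => rectPt T0 uv.1 uv.2)

def HasLabelJ (n j : ℕ) (T0 : ℤ × ℤ) (x : ℤ × ℤ) (m : ℕ) : Prop :=
  ∃ u v : ℕ, u < j ∧ v < n + 1 - j ∧ x = rectPt T0 u v ∧ m = 1 + u + v

def labelDJ (n j : ℕ) (T0 : ℤ × ℤ) (x : ℤ × ℤ) : ℕ :=
  sInf { m | HasLabelJ n j T0 x m }

def maxKeyJ (n j : ℕ) (T0 : ℤ × ℤ) : ℤ := ((pointsDJ n j T0).image keyOf).max.unbotD 0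
def minKeyJ (n j : ℕ) (T0 : ℤ × ℤ) : ℤ := ((pointsDJ n j T0).image keyOf).min.untopD 0
def maxXJ (n j : ℕ) (T0 : ℤ × ℤ) : ℤ := ((pointsDJ n j T0).image Prod.fst).max.unbotD 0
def minXJ (n j : ℕ) (T0 : ℤ × ℤ) : ℤ := ((pointsDJ n j T0).image Prod.fst).min.untopD 0

/-- `α_{cd}` arises from the diagonal row of `D(j)` with key `k`: that row consists
exactly of points labelled `c, …, d-1` in order. -/
def ArisesJ (n j : ℕ) (T0 : ℤ × ℤ) (c d : ℕ) (k : ℤ) : Prop :=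
  c < d ∧ ∃ p : ℤ × ℤ,
    ({ x : ℤ × ℤ | keyOf x = k ∧ InRectJ n j T0 x } =
      { y : ℤ × ℤ | ∃ t : ℕ, t ≤ d - c - 1 ∧ y = (p.1 + (t : ℤ), p.2 - (t : ℤ)) }) ∧
    ∀ t : ℕ, t ≤ d - c - 1 → HasLabelJ n j T0 (p.1 + (t : ℤ), p.2 - (t : ℤ)) (c + t)

def SJ (n j : ℕ) (T0 : ℤ × ℤ) : Set (ℕ × ℕ) :=
  { cd | ∃ k : ℤ, ArisesJ n j T0 cd.1 cd.2 k }

def S1xJ (n j : ℕ) (T0 : ℤ × ℤ) (x : ℤ × ℤ) (m : ℕ) : Set (ℕ × ℕ) :=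
  { cd | (∃ k : ℤ, keyOf x < k ∧ ArisesJ n j T0 cd.1 cd.2 k) ∨
      (ArisesJ n j T0 cd.1 cd.2 (keyOf x) ∧ m ≤ cd.1) }

def S2xJ (n j : ℕ) (T0 : ℤ × ℤ) (x : ℤ × ℤ) (m : ℕ) : Set (ℕ × ℕ) :=
  { cd | cd.1 = m ∧ m < cd.2 ∧ ∃ c' : ℕ, c' < m ∧ ArisesJ n j T0 c' cd.2 (keyOf x) }

def SxJ (n j : ℕ) (T0 : ℤ × ℤ) (x : ℤ × ℤ) (m : ℕ) : Set (ℕ × ℕ) :=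
  S1xJ n j T0 x m ∪ S2xJ n j T0 x m

/-- The sequence `μ(j)`: rows of `D(j)` from bottom-left to top-right, each row from
top-left to bottom-right (all multiplicities are `1`). -/
def muJ (n j : ℕ) : List ℕ :=
  (List.range j).flatMap (fun t => (List.range (n + 1 - j)).map (fun v => 1 + (j - 1 - t) + v))

def rowListJ (n j : ℕ) (T0 : ℤ × ℤ) (k : ℤ) (xlo : ℤ) : List ℕ :=
  ((List.range ((maxXJ n j T0 - minXJ n j T0).toNat + 1)).map
      (fun t => minXJ n j T0 + (t : ℤ))).flatMap
    (fun xx => if xlo ≤ xx ∧ (xx, k - xx) ∈ pointsDJ n j T0 then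
        [labelDJ n j T0 (xx, k - xx)] else [])

def opsToJ (n j : ℕ) (T0 : ℤ × ℤ) (x : ℤ × ℤ) : List ℕ :=
  (((List.range (((maxKeyJ n j T0 - keyOf x) / 2).toNat)).map
      (fun t => maxKeyJ n j T0 - 2 * (t : ℤ))).flatMap
    (fun k => (rowListJ n j T0 k (minXJ n j T0)).reverse)) ++
  (rowListJ n j T0 (keyOf x) x.1).reverse

/-! ### Reineke's description of the Kashiwara operators -/

/-- `f_{ij} = Σ_{l=j}^{n+1} v_{il} - Σ_{l=j+1}^{n+1} v_{i+1,l}`. -/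
def fRein (n : ℕ) (v : ℕ × ℕ → ℕ) (i j : ℕ) : ℤ :=
  (∑ l ∈ Finset.Icc j (n + 1), (v (i, l) : ℤ)) -
    ∑ l ∈ Finset.Icc (j + 1) (n + 1), (v (i + 1, l) : ℤ)

/-- The minimal `j ∈ (i, n+1]` at which `f_{ij}` is maximal. -/
def j0R (n : ℕ) (v : ℕ × ℕ → ℕ) (i : ℕ) : ℕ :=
  sInf { j : ℕ | i + 1 ≤ j ∧ j ≤ n + 1 ∧
    ∀ j' : ℕ, i + 1 ≤ j' → j' ≤ n + 1 → fRein n v i j' ≤ fRein n v i j }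

/-- The Reineke operator `F̃_i`: increase `v_{i,j₀}` by one and (if `j₀ > i + 1`)
decrease `v_{i+1,j₀}` by one. -/
def FRein (n i : ℕ) (v : ℕ × ℕ → ℕ) : ℕ × ℕ → ℕ := fun cd =>
  if cd = (i, j0R n v i) then v cd + 1
  else if cd = (i + 1, j0R n v i) ∧ i + 1 < j0R n v i then v cd - 1
  else v cd

/-- The `0/1` indicator vector of a set of positive roots. -/
def indVec (S : Set (ℕ × ℕ)) : ℕ × ℕ → ℕ := fun cd => if cd ∈ S then 1 else 0



/-! ### Auxiliary development -/

/-- Key of the bottom row of the rectangle of a component. -/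
def botK (Tc : ℕ × ℕ → ℤ × ℤ) (lo hi : ℕ) : ℤ := keyT Tc lo hi - 2 * ((lo : ℤ) - 2)

/-- The left wall of a rectangle. -/
def lwall (Tc : ℕ × ℕ → ℤ × ℤ) (lo hi : ℕ) : ℤ := dT Tc lo hi - 1

/-- The right wall of a rectangle. -/
def rwall (n : ℕ) (Tc : ℕ × ℕ → ℤ × ℤ) (lo hi : ℕ) : ℤ :=
  dT Tc lo hi + 2 * ((n : ℤ) - (hi : ℤ)) + 1

/-- The labelling constant of a component's rectangle. -/
def constC (n : ℕ) (P : PartialQuiver n) (Tc : ℕ × ℕ → ℤ × ℤ) (lo hi : ℕ) : ℤ :=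
  (baseOf n P lo hi : ℤ) + (Tc (lo, hi)).2

lemma comp_unique {n : ℕ} {P : PartialQuiver n} {lo hi lo' hi' e : ℕ}
    (h : IsComp n P lo hi) (h' : IsComp n P lo' hi')
    (h1 : lo ≤ e) (h2 : e ≤ hi) (h3 : lo' ≤ e) (h4 : e ≤ hi') : lo = lo' ∧ hi = hi' := by
  obtain ⟨hlo2, hlohi, hhin, hne, hrun, hl, hr⟩ := h
  obtain ⟨hlo2', hlohi', hhin', hne', hrun', hl', hr'⟩ := h'
  have hee : P.edge e = P.edge lo := hrun e h1 h2
  have hee' : P.edge e = P.edge lo' := hrun' e h3 h4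
  have hll' : P.edge lo = P.edge lo' := hee.symm.trans hee'
  constructor
  · rcases lt_trichotomy lo lo' with hlt | heq | hgt
    · have := hrun (lo' - 1) (by omega) (by omega)
      exact absurd (this.trans hll') hl'
    · exact heq
    · have := hrun' (lo - 1) (by omega) (by omega)
      exact absurd (this.trans hll'.symm) hl
  · rcases lt_trichotomy hi hi' with hlt | heq | hgt
    · have := hrun' (hi + 1) (by omega) (by omega)
      exact absurd (this.trans hll'.symm) hr
    · exact heq
    · have := hrun (hi' + 1) (by omega) (by omega)
      exact absurd (this.trans hll') hr'

lemma comp_disjoint {n : ℕ} {P : PartialQuiver n} {lo hi lo' hi' : ℕ}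
    (h : IsComp n P lo hi) (h' : IsComp n P lo' hi') (hlt : hi' < hi) : hi' < lo := by
  by_contra hc
  push_neg at hc
  have h2 := h.2.1
  have h2' := h'.2.1
  have := comp_unique h h' (le_max_left lo lo') (by omega)
    (le_max_right lo lo') (by omega)
  omega

lemma comp_exists {n : ℕ} {P : PartialQuiver n} {e : ℕ} (h2 : 2 ≤ e) (hn : e ≤ n)
    (hne : P.edge e ≠ PQSym.N) : ∃ lo hi, IsComp n P lo hi ∧ lo ≤ e ∧ e ≤ hi := by
  classical
  set q := P.edge e with hq
  set S : Set ℕ := {h | h ≤ n ∧ ∀ i, e ≤ i → i ≤ h → P.edge i = q} with hS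
  have heS : e ∈ S := ⟨hn, fun i h1 h2 => by
    have : i = e := le_antisymm h2 h1
    rw [this]⟩
  have hSbdd : BddAbove S := ⟨n, fun x hx => hx.1⟩
  set hi := sSup S with hhi
  have hiS : hi ∈ S := Nat.sSup_mem ⟨e, heS⟩ hSbdd
  have hie : e ≤ hi := le_csSup hSbdd heS
  set T : Set ℕ := {l | 2 ≤ l ∧ ∀ i, l ≤ i → i ≤ e → P.edge i = q} with hT
  have heT : e ∈ T := ⟨h2, fun i h1 h2 => by
    have : i = e := le_antisymm h2 h1
    rw [this]⟩
  set lo := sInf T with hlo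
  have hloT : lo ∈ T := Nat.sInf_mem ⟨e, heT⟩
  have hloe : lo ≤ e := Nat.sInf_le heT
  have hlo2 : 2 ≤ lo := hloT.1
  have hloq : P.edge lo = q := hloT.2 lo le_rfl hloe
  have hrun : ∀ j, lo ≤ j → j ≤ hi → P.edge j = P.edge lo := by
    intro j hj1 hj2
    rw [hloq]
    rcases le_or_gt j e with h | h
    · exact hloT.2 j hj1 h
    · exact hiS.2 j h.le hj2
  have hleft : P.edge (lo - 1) ≠ P.edge lo := by
    rcases eq_or_lt_of_le hlo2 with h | h
    · have : P.edge (lo - 1) = PQSym.N := P.undirected_outside _ (by omega)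
      rw [this, hloq]; exact fun hcon => hne hcon.symm
    · have hnotT : lo - 1 ∉ T := fun hmem => absurd (Nat.sInf_le hmem) (by omega)
      rw [hT] at hnotT
      simp only [Set.mem_setOf_eq, not_and, not_forall] at hnotT
      obtain ⟨i, hi1, hi2, hi3⟩ := hnotT (by omega)
      have : i = lo - 1 := by
        by_contra hcon
        exact hi3 (hloT.2 i (by omega) hi2)
      rw [← this, hloq]
      exact hi3
  have hright : P.edge (hi + 1) ≠ P.edge lo := by
    rw [hloq]
    rcases eq_or_lt_of_le hiS.1 with h | h
    · have : P.edge (hi + 1) = PQSym.N := P.undirected_outside _ (by omega)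
      rw [this]; exact fun hcon => hne hcon.symm
    · have hnotS : hi + 1 ∉ S := fun hmem =>
        absurd (le_csSup hSbdd hmem) (by omega)
      rw [hS] at hnotS
      simp only [Set.mem_setOf_eq, not_and, not_forall] at hnotS
      obtain ⟨i, hi1, hi2, hi3⟩ := hnotS (by omega)
      have : i = hi + 1 := by
        by_contra hcon
        exact hi3 (hiS.2 i hi1 (by omega))
      rw [← this]
      exact hi3
  exact ⟨lo, hi, ⟨hlo2, le_trans hloe hie, hiS.1, by rw [hloq]; exact hne,
    hrun, hleft, hright⟩, hloe, hie⟩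

lemma comp_right_adjacent {n : ℕ} {P : PartialQuiver n} {lo hi e : ℕ}
    (h : IsComp n P lo hi) (he2 : 2 ≤ e) (hel : e < lo) (hne : P.edge e ≠ PQSym.N) :
    ∃ lo2, IsComp n P lo2 (lo - 1) ∧ lo2 ≤ lo - 1 := by
  have hlo2 := h.1
  have hlohi := h.2.1
  have hhin := h.2.2.1
  have hlone := h.2.2.2.1
  have hedge : P.edge (lo - 1) ≠ PQSym.N :=
    P.directed_interval e (lo - 1) lo (by omega) (by omega) hne hlone
  obtain ⟨lo2, hi2, hc2, hl2, hr2⟩ := comp_exists (e := lo - 1) (by omega) (by omega) hedge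
  have : hi2 = lo - 1 := by
    by_contra hcon
    have hge : lo ≤ hi2 := by omega
    have := comp_unique h hc2 le_rfl hlohi (by omega) hge
    omega
  exact ⟨lo2, this ▸ hc2, this ▸ hl2⟩

lemma opp_type {n : ℕ} {P : PartialQuiver n} {loA hiA loB : ℕ}
    (hA : IsComp n P loA hiA) (hBne : P.edge loB ≠ PQSym.N) (hadj : hiA + 1 = loB) :
    (P.edge loB = PQSym.L ∧ P.edge loA = PQSym.R) ∨
    (P.edge loB = PQSym.R ∧ P.edge loA = PQSym.L) := by
  have h1 := hA.2.2.2.2.2.2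
  have h2 := hA.2.2.2.1
  rw [hadj] at h1
  cases hb : P.edge loB <;> cases ha : P.edge loA <;> simp_all


lemma glue {n : ℕ} {P : PartialQuiver n} {Tc : ℕ × ℕ → ℤ × ℤ}
    (hR : IsRealization n P Tc) {lo hi lo' hi' : ℕ}
    (hV : IsComp n P lo hi) (hW : IsComp n P lo' hi') (hadj : hi' + 1 = lo) :
    constC n P Tc lo hi = constC n P Tc lo' hi' ∧
    botK Tc lo hi ≤ botK Tc lo' hi' ∧
    keyT Tc lo' hi' ≤ keyT Tc lo hi ∧
    lwall Tc lo' hi' ≤ lwall Tc lo hi ∧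
    rwall n Tc lo hi ≤ rwall n Tc lo' hi' ∧
    0 ≤ dT Tc lo hi - dT Tc lo' hi' ∧
    dT Tc lo hi - dT Tc lo' hi' ≤ 2 * ((hi : ℤ) - (hi' : ℤ)) ∧
    (P.edge lo = PQSym.L →
      botK Tc lo' hi' = botK Tc lo hi ∧ dT Tc lo' hi' = dT Tc lo hi ∧
      keyT Tc lo' hi' + 2 ≤ keyT Tc lo hi) ∧
    (P.edge lo = PQSym.R →
      keyT Tc lo' hi' = keyT Tc lo hi ∧ rwall n Tc lo' hi' = rwall n Tc lo hi ∧
      botK Tc lo hi + 2 ≤ botK Tc lo' hi' ∧ lwall Tc lo' hi' + 2 ≤ lwall Tc lo hi ∧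
      dT Tc lo hi = dT Tc lo' hi' + 2 * ((hi : ℤ) - (hi' : ℤ))) := by
  have hb1 : 2 ≤ lo := hV.1
  have hb2 : lo ≤ hi := hV.2.1
  have hb3 : hi ≤ n := hV.2.2.1
  have hb1' : 2 ≤ lo' := hW.1
  have hb2' : lo' ≤ hi' := hW.2.1
  have hb3' : hi' ≤ n := hW.2.2.1
  have hre := hR lo hi lo' hi' hV hW hadj
  have htype := opp_type hW hV.2.2.2.1 hadj
  have c1 : ((lo - 2 : ℕ) : ℤ) = (lo : ℤ) - 2 := by omega
  have c2 : ((lo' - 2 : ℕ) : ℤ) = (lo' : ℤ) - 2 := by omega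
  have c3 : ((n - hi : ℕ) : ℤ) = (n : ℤ) - (hi : ℤ) := by omega
  have c4 : ((n - hi' : ℕ) : ℤ) = (n : ℤ) - (hi' : ℤ) := by omega
  have cadj : (hi' : ℤ) + 1 = (lo : ℤ) := by omega
  have cb2' : (lo' : ℤ) ≤ (hi' : ℤ) := by omega
  have cb2 : (lo : ℤ) ≤ (hi : ℤ) := by omega
  have cb1' : (2 : ℤ) ≤ (lo' : ℤ) := by omega
  rcases htype with ⟨hL, hL'⟩ | ⟨hRe, hR'⟩
  · have he := hre.1 hL
    rw [rectPt, rectPt, Prod.mk.injEq] at he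
    obtain ⟨h1, h2⟩ := he
    rw [c1, c2] at h1 h2
    push_cast at h1 h2
    have hbase : baseOf n P lo hi = 1 := by rw [baseOf, if_pos hL]
    have hbase' : baseOf n P lo' hi' = hi' - lo' + 2 := by
      rw [baseOf, if_neg (by rw [hL']; simp)]
    have cbase' : ((hi' - lo' + 2 : ℕ) : ℤ) = (hi' : ℤ) - (lo' : ℤ) + 2 := by omega
    refine ⟨?_, ?_, ?_, ?_, ?_, ?_, ?_, fun _ => ⟨?_, ?_, ?_⟩, fun hcon => ?_⟩
    · simp only [constC, hbase, hbase', cbase']; push_cast; linarith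
    · simp only [botK, keyT, keyOf]; linarith
    · simp only [keyT, keyOf]; linarith
    · simp only [lwall, dT]; linarith
    · simp only [rwall, dT]; linarith
    · simp only [dT]; linarith
    · simp only [dT]; linarith
    · simp only [botK, keyT, keyOf]; linarith
    · simp only [dT]; linarith
    · simp only [keyT, keyOf]; linarith
    · rw [hcon] at hL; simp at hL
  · have he := hre.2 hRe
    rw [rectPt, rectPt, Prod.mk.injEq] at he
    obtain ⟨h1, h2⟩ := he
    rw [c3, c4] at h1 h2
    push_cast at h1 h2
    have hbase : baseOf n P lo hi = hi - lo + 2 := by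
      rw [baseOf, if_neg (by rw [hRe]; simp)]
    have hbase' : baseOf n P lo' hi' = 1 := by rw [baseOf, if_pos hR']
    have cbase : ((hi - lo + 2 : ℕ) : ℤ) = (hi : ℤ) - (lo : ℤ) + 2 := by omega
    refine ⟨?_, ?_, ?_, ?_, ?_, ?_, ?_, fun hcon => ?_, fun _ => ⟨?_, ?_, ?_, ?_, ?_⟩⟩
    · simp only [constC, hbase, hbase', cbase]; push_cast; linarith
    · simp only [botK, keyT, keyOf]; linarith
    · simp only [keyT, keyOf]; linarith
    · simp only [lwall, dT]; linarith
    · simp only [rwall, dT]; linarith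
    · simp only [dT]; linarith
    · simp only [dT]; linarith
    · rw [hcon] at hRe; simp at hRe
    · simp only [keyT, keyOf]; linarith
    · simp only [rwall, dT]; linarith
    · simp only [botK, keyT, keyOf]; linarith
    · simp only [lwall, dT]; linarith
    · simp only [dT]; linarith

lemma chain {n : ℕ} {P : PartialQuiver n} {Tc : ℕ × ℕ → ℤ × ℤ}
    (hR : IsRealization n P Tc) :
    ∀ k lo hi lo' hi', lo - hi' ≤ k → IsComp n P lo hi → IsComp n P lo' hi' → hi' < lo →
    constC n P Tc lo hi = constC n P Tc lo' hi' ∧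
    botK Tc lo hi ≤ botK Tc lo' hi' ∧
    keyT Tc lo' hi' ≤ keyT Tc lo hi ∧
    lwall Tc lo' hi' ≤ lwall Tc lo hi ∧
    rwall n Tc lo hi ≤ rwall n Tc lo' hi' ∧
    0 ≤ dT Tc lo hi - dT Tc lo' hi' ∧
    dT Tc lo hi - dT Tc lo' hi' ≤ 2 * ((hi : ℤ) - (hi' : ℤ)) := by
  intro k
  induction k with
  | zero => intro lo hi lo' hi' hk _ _ hlt; omega
  | succ k ih =>
    intro lo hi lo' hi' hk hV hW hlt
    rcases eq_or_lt_of_le (show hi' + 1 ≤ lo from hlt) with hadj | hlt2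
    · have hg := glue hR hV hW hadj
      exact ⟨hg.1, hg.2.1, hg.2.2.1, hg.2.2.2.1, hg.2.2.2.2.1, hg.2.2.2.2.2.1,
        hg.2.2.2.2.2.2.1⟩
    · obtain ⟨lo2, hM, hlo2⟩ := comp_right_adjacent hV hW.1
        (by have := hW.2.1; omega) hW.2.2.2.1
      have hg := glue hR hV hM (by have := hV.1; omega)
      have hd : hi' < lo2 := comp_disjoint hM hW (by omega)
      have hrec := ih lo2 (lo - 1) lo' hi' (by omega) hM hW hd
      have clo : ((lo - 1 : ℕ) : ℤ) = (lo : ℤ) - 1 := by have := hV.1; omega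
      refine ⟨hg.1.trans hrec.1, le_trans hg.2.1 hrec.2.1,
        le_trans hrec.2.2.1 hg.2.2.1, le_trans hrec.2.2.2.1 hg.2.2.2.1,
        le_trans hg.2.2.2.2.1 hrec.2.2.2.2.1, by linarith [hg.2.2.2.2.2.1,
          hrec.2.2.2.2.2.1], ?_⟩
      have b1 := hg.2.2.2.2.2.2.1
      have b2 := hrec.2.2.2.2.2.2
      rw [clo] at b1 b2
      linarith

lemma const_global {n : ℕ} {P : PartialQuiver n} {Tc : ℕ × ℕ → ℤ × ℤ}
    (hR : IsRealization n P Tc) {lo hi lo' hi' : ℕ}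
    (hV : IsComp n P lo hi) (hW : IsComp n P lo' hi') :
    constC n P Tc lo hi = constC n P Tc lo' hi' := by
  rcases lt_trichotomy hi hi' with h | h | h
  · have hd := comp_disjoint hW hV h
    exact ((chain hR (lo' - hi) lo' hi' lo hi le_rfl hW hV hd).1).symm
  · have hu := comp_unique hV hW hV.2.1 le_rfl (by have := hW.2.1; omega) (by omega)
    rw [hu.1, hu.2]
  · have hd := comp_disjoint hV hW h
    exact (chain hR (lo - hi') lo hi lo' hi' le_rfl hV hW hd).1


lemma hasLabel_int {n : ℕ} {P : PartialQuiver n} {Tc : ℕ × ℕ → ℤ × ℤ}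
    (hR : IsRealization n P Tc) {x : ℤ × ℤ} {m lo hi : ℕ}
    (hc : IsComp n P lo hi) (h : HasLabel n P Tc x m) :
    (m : ℤ) = constC n P Tc lo hi - x.2 := by
  obtain ⟨lo0, hi0, u, v, hc0, hu, hv, hx, hm⟩ := h
  rw [const_global hR hc hc0]
  subst hm
  rw [hx]
  simp only [constC, rectPt]
  push_cast
  ring

lemma right_strict {n : ℕ} {P : PartialQuiver n} {Tc : ℕ × ℕ → ℤ × ℤ}
    (hR : IsRealization n P Tc) {loA hiA loW hiW : ℕ}
    (hA : IsComp n P loA hiA) (hW : IsComp n P loW hiW) (hlt : hiW < loA) :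
    (P.edge loA = PQSym.R → botK Tc loA hiA + 2 ≤ botK Tc loW hiW) ∧
    (P.edge loA = PQSym.L → keyT Tc loW hiW + 2 ≤ keyT Tc loA hiA) := by
  obtain ⟨lo2, hM, hlo2⟩ := comp_right_adjacent hA hW.1 (by have := hW.2.1; omega)
    hW.2.2.2.1
  have hg := glue hR hA hM (by have := hA.1; omega)
  rcases eq_or_lt_of_le (show hiW ≤ loA - 1 from by omega) with heq | hlt2
  · have hu := comp_unique hW hM hW.2.1 le_rfl (by omega) (by omega)
    obtain ⟨e1, e2⟩ := hu
    rw [e1, e2]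
    exact ⟨fun hr => (hg.2.2.2.2.2.2.2.2 hr).2.2.1, fun hl => (hg.2.2.2.2.2.2.2.1 hl).2.2⟩
  · have hd : hiW < lo2 := comp_disjoint hM hW (by omega)
    have hch := chain hR (lo2 - hiW) lo2 (loA - 1) loW hiW le_rfl hM hW hd
    constructor
    · intro hr
      have := (hg.2.2.2.2.2.2.2.2 hr).2.2.1
      linarith [hch.2.1]
    · intro hl
      have := (hg.2.2.2.2.2.2.2.1 hl).2.2
      linarith [hch.2.2.1]

lemma cellRow_of_comp {n : ℕ} {P : PartialQuiver n} {Tc : ℕ × ℕ → ℤ × ℤ}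
    {lo hi : ℕ} (hc : IsComp n P lo hi) (u : ℕ) (hu : u ≤ lo - 2) :
    IsCellRow n P Tc (keyT Tc lo hi - 2 * (u : ℤ)) := by
  have hb1 := hc.1; have hb2 := hc.2.1; have hb3 := hc.2.2.1
  refine ⟨rectPt (Tc (lo, hi)) u 0, ?_, ?_⟩
  · rw [pointsD, Finset.mem_biUnion]
    refine ⟨(lo, hi), ?_, ?_⟩
    · rw [Finset.mem_filter]
      refine ⟨?_, hc⟩
      rw [Finset.mem_product]
      simp only [Finset.mem_Icc]
      omega
    · rw [Finset.mem_image]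
      refine ⟨(u, 0), ?_, rfl⟩
      rw [Finset.mem_product]
      simp only [Finset.mem_range]
      omega
  · simp only [keyOf, rectPt, keyT]
    push_cast
    ring

lemma arisesY_extract {n : ℕ} {P : PartialQuiver n} {Tc : ℕ × ℕ → ℤ × ℤ} {z : ℤ}
    {lo hi c d : ℕ} {k : ℤ} (hR : IsRealization n P Tc)
    (hc : IsComp n P lo hi) (h : ArisesFromY n P Tc z lo hi c d k) :
    d = c + 1 + (n - hi) ∧ k = dT Tc lo hi + 2 * (constC n P Tc lo hi - (c : ℤ)) ∧
    botK Tc lo hi ≤ k ∧ k ≤ keyT Tc lo hi ∧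
    (P.edge lo = PQSym.L → (z < k ↔ z < keyT Tc lo hi)) ∧
    (P.edge lo = PQSym.R → (z < k ↔ z < botK Tc lo hi)) := by
  obtain ⟨hcd, p, hset, hlab⟩ := h
  have hmem := Set.ext_iff.mp hset
  have hpR : p ∈ {y : ℤ × ℤ | ∃ t : ℕ, t ≤ d - c - 1 ∧ y = (p.1 + (t : ℤ), p.2 - (t : ℤ))} :=
    ⟨0, Nat.zero_le _, by simp⟩
  obtain ⟨hpk, hprect, hpcl, hpcr⟩ := (hmem p).mpr hpR
  obtain ⟨u0, v0, hu0, hv0, hpe⟩ := hprect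
  have hb1 := hc.1; have hb2 := hc.2.1; have hb3 := hc.2.2.1
  have hkey : k = keyT Tc lo hi - 2 * (u0 : ℤ) := by
    rw [← hpk, hpe]; simp only [keyOf, rectPt, keyT]; ring
  have hp1 : p.1 = (Tc (lo, hi)).1 - (u0 : ℤ) + (v0 : ℤ) := by rw [hpe]; rfl
  have hp2 : p.2 = (Tc (lo, hi)).2 - (u0 : ℤ) - (v0 : ℤ) := by rw [hpe]; rfl
  have hrowmem : ∀ v : ℕ, v ≤ n - hi → rectPt (Tc (lo, hi)) u0 v ∈
      {x : ℤ × ℤ | keyOf x = k ∧ InRhoStar n P Tc z lo hi x} := by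
    intro v hv
    have hkq : keyOf (rectPt (Tc (lo, hi)) u0 v) = k := by
      rw [hkey]; simp only [keyOf, rectPt, keyT]; push_cast; ring
    refine ⟨hkq, ⟨u0, v, hu0, hv, rfl⟩, ?_, ?_⟩
    · intro hL
      rw [hkq, ← hpk]
      exact hpcl hL
    · intro hRe
      rw [hkq, ← hpk]
      exact hpcr hRe
  have hv00 : v0 = 0 := by
    obtain ⟨t, ht, hq⟩ := (hmem _).mp (hrowmem 0 (Nat.zero_le _))
    have h1 : (rectPt (Tc (lo, hi)) u0 0).1 = p.1 + (t : ℤ) := by rw [hq]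
    simp only [rectPt] at h1
    rw [hp1] at h1
    push_cast at h1
    have : (v0 : ℤ) + (t : ℤ) = 0 := by linarith
    omega
  have hle1 : n - hi ≤ d - c - 1 := by
    obtain ⟨t, ht, hq⟩ := (hmem _).mp (hrowmem (n - hi) le_rfl)
    have h1 : (rectPt (Tc (lo, hi)) u0 (n - hi)).1 = p.1 + (t : ℤ) := by rw [hq]
    simp only [rectPt] at h1
    rw [hp1] at h1
    have : ((n - hi : ℕ) : ℤ) = (v0 : ℤ) + (t : ℤ) := by linarith
    omega
  have hle2 : d - c - 1 ≤ n - hi := by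
    have hsR : (p.1 + ((d - c - 1 : ℕ) : ℤ), p.2 - ((d - c - 1 : ℕ) : ℤ)) ∈
        {y : ℤ × ℤ | ∃ t : ℕ, t ≤ d - c - 1 ∧ y = (p.1 + (t : ℤ), p.2 - (t : ℤ))} :=
      ⟨d - c - 1, le_rfl, rfl⟩
    obtain ⟨_, hsrect, _, _⟩ := (hmem _).mpr hsR
    obtain ⟨u1, v1, hu1, hv1, hse⟩ := hsrect
    have h1 : p.1 + ((d - c - 1 : ℕ) : ℤ) = (Tc (lo, hi)).1 - (u1 : ℤ) + (v1 : ℤ) := by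
      have := congrArg Prod.fst hse; simpa [rectPt] using this
    have h2 : p.2 - ((d - c - 1 : ℕ) : ℤ) = (Tc (lo, hi)).2 - (u1 : ℤ) - (v1 : ℤ) := by
      have := congrArg Prod.snd hse; simpa [rectPt] using this
    rw [hp1] at h1
    rw [hp2] at h2
    have e2 : (v1 : ℤ) = ((d - c - 1 : ℕ) : ℤ) + (v0 : ℤ) := by linarith
    omega
  have hl0 := hlab 0 (Nat.zero_le _)
  have hp0 : ((p.1 + ((0 : ℕ) : ℤ), p.2 - ((0 : ℕ) : ℤ)) : ℤ × ℤ) = p := by simp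
  rw [hp0] at hl0
  have hcl := hasLabel_int hR hc hl0
  push_cast at hcl
  rw [hp2, hv00] at hcl
  push_cast at hcl
  refine ⟨by omega, ?_, ?_, ?_, ?_, ?_⟩
  · rw [hkey]
    simp only [keyT, keyOf, dT]
    linarith
  · rw [hkey]
    simp only [botK]
    have : (u0 : ℤ) ≤ (lo : ℤ) - 2 := by omega
    linarith
  · rw [hkey]
    have : (0 : ℤ) ≤ (u0 : ℤ) := by positivity
    linarith
  · intro hL
    rw [← hpk]
    exact hpcl hL
  · intro hRe
    rw [← hpk]
    exact hpcr hRe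


lemma lwall_lt_rwall {n : ℕ} {P : PartialQuiver n} {Tc : ℕ × ℕ → ℤ × ℤ} {lo hi : ℕ}
    (hc : IsComp n P lo hi) : lwall Tc lo hi < rwall n Tc lo hi := by
  have := hc.2.2.1
  have : (hi : ℤ) ≤ (n : ℤ) := by omega
  simp only [lwall, rwall]
  linarith

lemma botK_le_keyT {n : ℕ} {P : PartialQuiver n} {Tc : ℕ × ℕ → ℤ × ℤ} {lo hi : ℕ}
    (hc : IsComp n P lo hi) : botK Tc lo hi ≤ keyT Tc lo hi := by
  have := hc.1
  have : (2 : ℤ) ≤ (lo : ℤ) := by omega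
  simp only [botK]
  linarith

lemma comp_classify {n : ℕ} {P : PartialQuiver n} {loA hiA loB hiB : ℕ}
    (hA : IsComp n P loA hiA) (hB : IsComp n P loB hiB) (hBA : hiB = hiA + 1) :
    ∀ l h : ℕ, IsComp n P l h →
      (l = loA ∧ h = hiA) ∨ (l = loB ∧ h = hiB) ∨ hiB < l ∨ h < loA := by
  intro l h hcomp
  rcases lt_trichotomy h hiA with h1 | h1 | h1
  · right; right; right; exact comp_disjoint hA hcomp h1
  · left
    have := comp_unique hcomp hA (h1 ▸ hcomp.2.1) le_rfl (h1 ▸ hA.2.1) h1.le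
    exact ⟨this.1, h1⟩
  · rcases lt_trichotomy h hiB with h2 | h2 | h2
    · omega
    · right; left
      have := comp_unique hcomp hB (h2 ▸ hcomp.2.1) le_rfl (h2 ▸ hB.2.1) h2.le
      exact ⟨this.1, h2⟩
    · right; right; left; exact comp_disjoint hcomp hB h2

lemma parity_rows_L {n : ℕ} {P : PartialQuiver n} {Tc : ℕ × ℕ → ℤ × ℤ}
    (hR : IsRealization n P Tc) {loA hiA loB hiB : ℕ}
    (hA : IsComp n P loA hiA) (hB : IsComp n P loB hiB)
    (hadj : hiA + 1 = loB) (hsing : loB = hiB) (hBL : P.edge loB = PQSym.L) :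
    (dEdges n P Tc (botK Tc loB hiB)).card
      = (dEdges n P Tc (keyT Tc loA hiA + 2)).card + 1 ∧
    2 ≤ (dEdges n P Tc (keyT Tc loA hiA + 2)).card := by
  have hg := glue hR hB hA hadj
  have hgL := hg.2.2.2.2.2.2.2.1 hBL
  obtain ⟨hbotAB, hdTAB, htT⟩ := hgL
  have hARtype : P.edge loA = PQSym.R := by
    rcases opp_type hA hB.2.2.2.1 hadj with ⟨h1, h2⟩ | ⟨h1, h2⟩
    · exact h2
    · rw [hBL] at h1; simp at h1
  have hBA : hiB = hiA + 1 := by omega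
  have hbKA := botK_le_keyT (Tc := Tc) hA
  have hbKB := botK_le_keyT (Tc := Tc) hB
  have hclass := comp_classify hA hB hBA
  have hcovB1 : CoversRow n P Tc loB hiB (botK Tc loB hiB) := ⟨hB, le_rfl, hbKB⟩
  have hcovB2 : CoversRow n P Tc loB hiB (keyT Tc loA hiA + 2) := by
    refine ⟨hB, ?_, by linarith⟩
    show botK Tc loB hiB ≤ _
    rw [← hbotAB]; linarith
  have hcovA1 : CoversRow n P Tc loA hiA (botK Tc loB hiB) :=
    ⟨hA, le_of_eq hbotAB, by rw [hbotAB] at hbKA; exact hbKA⟩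
  have hnA2 : ¬ CoversRow n P Tc loA hiA (keyT Tc loA hiA + 2) := by
    rintro ⟨-, -, hle⟩; linarith
  have hleft : ∀ l h : ℕ, IsComp n P l h → hiB < l →
      CoversRow n P Tc l h (botK Tc loB hiB) ∧
      CoversRow n P Tc l h (keyT Tc loA hiA + 2) := by
    intro l h hcomp hlt
    have hch := chain hR (l - hiB) l h loB hiB le_rfl hcomp hB hlt
    refine ⟨⟨hcomp, hch.2.1, by linarith [hch.2.2.1]⟩,
      ⟨hcomp, ?_, by linarith [hch.2.2.1]⟩⟩
    show botK Tc l h ≤ _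
    have := hch.2.1
    rw [← hbotAB] at this
    linarith
  have hright : ∀ l h : ℕ, IsComp n P l h → h < loA →
      ¬ CoversRow n P Tc l h (botK Tc loB hiB) ∧
      ¬ CoversRow n P Tc l h (keyT Tc loA hiA + 2) := by
    intro l h hcomp hlt
    have hstr := (right_strict hR hA hcomp hlt).1 hARtype
    have hch := chain hR (loA - h) loA hiA l h le_rfl hA hcomp hlt
    constructor
    · rintro ⟨-, hb, -⟩
      have hb' : botK Tc l h ≤ botK Tc loB hiB := hb
      rw [hbotAB] at hstr
      linarith
    · rintro ⟨-, -, ht⟩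
      linarith [hch.2.2.1]
  have hAmem : (loA, hiA) ∈ Finset.Icc 2 n ×ˢ Finset.Icc 2 n := by
    rw [Finset.mem_product]
    simp only [Finset.mem_Icc]
    have := hA.1; have := hA.2.1; have := hA.2.2.1
    omega
  have hBmem : (loB, hiB) ∈ Finset.Icc 2 n ×ˢ Finset.Icc 2 n := by
    rw [Finset.mem_product]
    simp only [Finset.mem_Icc]
    have := hB.1; have := hB.2.1; have := hB.2.2.1
    omega
  have hCS : (Finset.Icc 2 n ×ˢ Finset.Icc 2 n).filter
        (fun lh => CoversRow n P Tc lh.1 lh.2 (botK Tc loB hiB))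
      = insert (loA, hiA) ((Finset.Icc 2 n ×ˢ Finset.Icc 2 n).filter
        (fun lh => CoversRow n P Tc lh.1 lh.2 (keyT Tc loA hiA + 2))) := by
    ext ⟨l, h⟩
    simp only [Finset.mem_insert, Finset.mem_filter, Prod.mk.injEq]
    constructor
    · rintro ⟨hmem, hcov⟩
      rcases hclass l h hcov.1 with ⟨e1, e2⟩ | ⟨e1, e2⟩ | hlt | hlt
      · exact Or.inl ⟨e1, e2⟩
      · subst e1; subst e2; exact Or.inr ⟨hmem, hcovB2⟩
      · exact Or.inr ⟨hmem, (hleft l h hcov.1 hlt).2⟩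
      · exact absurd hcov ((hright l h hcov.1 hlt).1)
    · rintro (⟨e1, e2⟩ | ⟨hmem, hcov⟩)
      · subst e1; subst e2; exact ⟨hAmem, hcovA1⟩
      · refine ⟨hmem, ?_⟩
        rcases hclass l h hcov.1 with ⟨e1, e2⟩ | ⟨e1, e2⟩ | hlt | hlt
        · subst e1; subst e2; exact absurd hcov hnA2
        · subst e1; subst e2; exact hcovB1
        · exact (hleft l h hcov.1 hlt).1
        · exact absurd hcov ((hright l h hcov.1 hlt).2)
  have hAnotCS : (loA, hiA) ∉ (Finset.Icc 2 n ×ˢ Finset.Icc 2 n).filter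
      (fun lh => CoversRow n P Tc lh.1 lh.2 (keyT Tc loA hiA + 2)) := by
    rw [Finset.mem_filter]
    rintro ⟨-, hcov⟩
    exact hnA2 hcov
  have hrwBA : rwall n Tc loB hiB = rwall n Tc loA hiA - 2 := by
    have : (hiB : ℤ) = (hiA : ℤ) + 1 := by omega
    simp only [rwall]
    rw [hdTAB, this]
    ring
  have hwallbound : ∀ w ∈ dEdges n P Tc (keyT Tc loA hiA + 2),
      w ≤ rwall n Tc loB hiB := by
    intro w hw
    rw [dEdges, Finset.mem_biUnion] at hw
    obtain ⟨⟨l, h⟩, hlh, hwmem⟩ := hw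
    rw [Finset.mem_filter] at hlh
    have hcov := hlh.2
    have hwlh : w = lwall Tc l h ∨ w = rwall n Tc l h := by
      simp only [Finset.mem_insert, Finset.mem_singleton] at hwmem
      simp only [lwall, rwall]
      exact hwmem
    have hlr := lwall_lt_rwall (Tc := Tc) hcov.1
    have hbound : rwall n Tc l h ≤ rwall n Tc loB hiB := by
      rcases hclass l h hcov.1 with ⟨e1, e2⟩ | ⟨e1, e2⟩ | hlt | hlt
      · subst e1; subst e2; exact absurd hcov hnA2
      · subst e1; subst e2; exact le_rfl
      · have hch := chain hR (l - hiB) l h loB hiB le_rfl hcov.1 hB hlt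
        linarith [hch.2.2.2.2.1]
      · exact absurd hcov ((hright l h hcov.1 hlt).2)
    rcases hwlh with h' | h' <;> rw [h'] <;> linarith
  have hlwA : lwall Tc loA hiA ∈ dEdges n P Tc (keyT Tc loA hiA + 2) := by
    rw [dEdges, Finset.mem_biUnion]
    refine ⟨(loB, hiB), ?_, ?_⟩
    · rw [Finset.mem_filter]; exact ⟨hBmem, hcovB2⟩
    · simp only [Finset.mem_insert, Finset.mem_singleton]
      left
      simp only [lwall] at hdTAB ⊢
      rw [hdTAB]
  have hrwAnot : rwall n Tc loA hiA ∉ dEdges n P Tc (keyT Tc loA hiA + 2) := by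
    intro hmem'
    have := hwallbound _ hmem'
    linarith
  have hd1 : dEdges n P Tc (botK Tc loB hiB)
      = insert (rwall n Tc loA hiA) (dEdges n P Tc (keyT Tc loA hiA + 2)) := by
    simp only [dEdges]
    rw [hCS, Finset.biUnion_insert]
    have hfA : ({dT Tc loA hiA - 1, dT Tc loA hiA + 2 * ((n : ℤ) - (hiA : ℤ)) + 1} :
        Finset ℤ) = {lwall Tc loA hiA, rwall n Tc loA hiA} := by
      simp only [lwall, rwall]
    rw [hfA]
    rw [show ∀ (a b : ℤ) (s : Finset ℤ), ({a, b} : Finset ℤ) ∪ s = insert a (insert b s)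
      from fun a b s => by ext w; simp [Finset.mem_union, Finset.mem_insert, or_assoc]]
    rw [Finset.insert_comm]
    congr 1
    apply Finset.insert_eq_self.mpr
    simpa only [dEdges] using hlwA
  constructor
  · rw [hd1, Finset.card_insert_of_notMem hrwAnot]
  · have hsub : ({lwall Tc loB hiB, rwall n Tc loB hiB} : Finset ℤ)
        ⊆ dEdges n P Tc (keyT Tc loA hiA + 2) := by
      intro w hw
      rw [dEdges, Finset.mem_biUnion]
      refine ⟨(loB, hiB), ?_, ?_⟩
      · rw [Finset.mem_filter]; exact ⟨hBmem, hcovB2⟩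
      · simpa only [lwall, rwall] using hw
    have hne := (lwall_lt_rwall (Tc := Tc) hB).ne
    calc 2 = ({lwall Tc loB hiB, rwall n Tc loB hiB} : Finset ℤ).card :=
          (Finset.card_pair hne).symm
      _ ≤ _ := Finset.card_le_card hsub

lemma parity_rows_R {n : ℕ} {P : PartialQuiver n} {Tc : ℕ × ℕ → ℤ × ℤ}
    (hR : IsRealization n P Tc) {loA hiA loB hiB : ℕ}
    (hA : IsComp n P loA hiA) (hB : IsComp n P loB hiB)
    (hadj : hiA + 1 = loB) (hsing : loB = hiB) (hBR : P.edge loB = PQSym.R) :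
    (dEdges n P Tc (keyT Tc loB hiB)).card
      = (dEdges n P Tc (botK Tc loB hiB)).card + 1 ∧
    2 ≤ (dEdges n P Tc (botK Tc loB hiB)).card := by
  have hg := glue hR hB hA hadj
  have hgR := hg.2.2.2.2.2.2.2.2 hBR
  obtain ⟨htopAB, hrwAB, hbotstr, hlwstr, hdTeq⟩ := hgR
  have hALtype : P.edge loA = PQSym.L := by
    rcases opp_type hA hB.2.2.2.1 hadj with ⟨h1, h2⟩ | ⟨h1, h2⟩
    · rw [hBR] at h1; simp at h1
    · exact h2
  have hBA : hiB = hiA + 1 := by omega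
  have hbKA := botK_le_keyT (Tc := Tc) hA
  have hbKB := botK_le_keyT (Tc := Tc) hB
  have hclass := comp_classify hA hB hBA
  have hcovB1 : CoversRow n P Tc loB hiB (keyT Tc loB hiB) := ⟨hB, hbKB, le_rfl⟩
  have hcovB2 : CoversRow n P Tc loB hiB (botK Tc loB hiB) := ⟨hB, le_rfl, hbKB⟩
  have hcovA1 : CoversRow n P Tc loA hiA (keyT Tc loB hiB) :=
    ⟨hA, by rw [← htopAB]; exact hbKA, le_of_eq htopAB.symm⟩
  have hnA2 : ¬ CoversRow n P Tc loA hiA (botK Tc loB hiB) := by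
    rintro ⟨-, hb, -⟩
    have hb' : botK Tc loA hiA ≤ botK Tc loB hiB := hb
    linarith
  have hleft : ∀ l h : ℕ, IsComp n P l h → hiB < l →
      CoversRow n P Tc l h (keyT Tc loB hiB) ∧
      CoversRow n P Tc l h (botK Tc loB hiB) := by
    intro l h hcomp hlt
    have hch := chain hR (l - hiB) l h loB hiB le_rfl hcomp hB hlt
    refine ⟨⟨hcomp, ?_, hch.2.2.1⟩, ⟨hcomp, hch.2.1, by linarith [hch.2.2.1]⟩⟩
    show botK Tc l h ≤ _
    linarith [hch.2.1]
  have hright : ∀ l h : ℕ, IsComp n P l h → h < loA →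
      ¬ CoversRow n P Tc l h (keyT Tc loB hiB) ∧
      ¬ CoversRow n P Tc l h (botK Tc loB hiB) := by
    intro l h hcomp hlt
    have hstr := (right_strict hR hA hcomp hlt).2 hALtype
    have hch := chain hR (loA - h) loA hiA l h le_rfl hA hcomp hlt
    constructor
    · rintro ⟨-, -, ht⟩
      rw [htopAB] at hstr
      linarith
    · rintro ⟨-, hb, -⟩
      have hb' : botK Tc l h ≤ botK Tc loB hiB := hb
      linarith [hch.2.1]
  have hAmem : (loA, hiA) ∈ Finset.Icc 2 n ×ˢ Finset.Icc 2 n := by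
    rw [Finset.mem_product]
    simp only [Finset.mem_Icc]
    have := hA.1; have := hA.2.1; have := hA.2.2.1
    omega
  have hBmem : (loB, hiB) ∈ Finset.Icc 2 n ×ˢ Finset.Icc 2 n := by
    rw [Finset.mem_product]
    simp only [Finset.mem_Icc]
    have := hB.1; have := hB.2.1; have := hB.2.2.1
    omega
  have hCS : (Finset.Icc 2 n ×ˢ Finset.Icc 2 n).filter
        (fun lh => CoversRow n P Tc lh.1 lh.2 (keyT Tc loB hiB))
      = insert (loA, hiA) ((Finset.Icc 2 n ×ˢ Finset.Icc 2 n).filter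
        (fun lh => CoversRow n P Tc lh.1 lh.2 (botK Tc loB hiB))) := by
    ext ⟨l, h⟩
    simp only [Finset.mem_insert, Finset.mem_filter, Prod.mk.injEq]
    constructor
    · rintro ⟨hmem, hcov⟩
      rcases hclass l h hcov.1 with ⟨e1, e2⟩ | ⟨e1, e2⟩ | hlt | hlt
      · exact Or.inl ⟨e1, e2⟩
      · subst e1; subst e2; exact Or.inr ⟨hmem, hcovB2⟩
      · exact Or.inr ⟨hmem, (hleft l h hcov.1 hlt).2⟩
      · exact absurd hcov ((hright l h hcov.1 hlt).1)
    · rintro (⟨e1, e2⟩ | ⟨hmem, hcov⟩)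
      · subst e1; subst e2; exact ⟨hAmem, hcovA1⟩
      · refine ⟨hmem, ?_⟩
        rcases hclass l h hcov.1 with ⟨e1, e2⟩ | ⟨e1, e2⟩ | hlt | hlt
        · subst e1; subst e2; exact absurd hcov hnA2
        · subst e1; subst e2; exact hcovB1
        · exact (hleft l h hcov.1 hlt).1
        · exact absurd hcov ((hright l h hcov.1 hlt).2)
  have hwallbound : ∀ w ∈ dEdges n P Tc (botK Tc loB hiB),
      lwall Tc loB hiB ≤ w := by
    intro w hw
    rw [dEdges, Finset.mem_biUnion] at hw
    obtain ⟨⟨l, h⟩, hlh, hwmem⟩ := hw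
    rw [Finset.mem_filter] at hlh
    have hcov := hlh.2
    have hwlh : w = lwall Tc l h ∨ w = rwall n Tc l h := by
      simp only [Finset.mem_insert, Finset.mem_singleton] at hwmem
      simp only [lwall, rwall]
      exact hwmem
    have hlr := lwall_lt_rwall (Tc := Tc) hcov.1
    have hbound : lwall Tc loB hiB ≤ lwall Tc l h := by
      rcases hclass l h hcov.1 with ⟨e1, e2⟩ | ⟨e1, e2⟩ | hlt | hlt
      · subst e1; subst e2; exact absurd hcov hnA2
      · subst e1; subst e2; exact le_rfl
      · have hch := chain hR (l - hiB) l h loB hiB le_rfl hcov.1 hB hlt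
        linarith [hch.2.2.2.1]
      · exact absurd hcov ((hright l h hcov.1 hlt).2)
    rcases hwlh with h' | h' <;> rw [h'] <;> linarith
  have hrwA : rwall n Tc loA hiA ∈ dEdges n P Tc (botK Tc loB hiB) := by
    rw [dEdges, Finset.mem_biUnion]
    refine ⟨(loB, hiB), ?_, ?_⟩
    · rw [Finset.mem_filter]; exact ⟨hBmem, hcovB2⟩
    · simp only [Finset.mem_insert, Finset.mem_singleton]
      right
      simp only [rwall] at hrwAB ⊢
      rw [hrwAB]
  have hlwAnot : lwall Tc loA hiA ∉ dEdges n P Tc (botK Tc loB hiB) := by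
    intro hmem'
    have := hwallbound _ hmem'
    linarith
  have hd1 : dEdges n P Tc (keyT Tc loB hiB)
      = insert (lwall Tc loA hiA) (dEdges n P Tc (botK Tc loB hiB)) := by
    simp only [dEdges]
    rw [hCS, Finset.biUnion_insert]
    have hfA : ({dT Tc loA hiA - 1, dT Tc loA hiA + 2 * ((n : ℤ) - (hiA : ℤ)) + 1} :
        Finset ℤ) = {lwall Tc loA hiA, rwall n Tc loA hiA} := by
      simp only [lwall, rwall]
    rw [hfA]
    rw [show ∀ (a b : ℤ) (s : Finset ℤ), ({a, b} : Finset ℤ) ∪ s = insert a (insert b s)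
      from fun a b s => by ext w; simp [Finset.mem_union, Finset.mem_insert, or_assoc]]
    congr 1
    apply Finset.insert_eq_self.mpr
    simpa only [dEdges] using hrwA
  constructor
  · rw [hd1, Finset.card_insert_of_notMem hlwAnot]
  · have hsub : ({lwall Tc loB hiB, rwall n Tc loB hiB} : Finset ℤ)
        ⊆ dEdges n P Tc (botK Tc loB hiB) := by
      intro w hw
      rw [dEdges, Finset.mem_biUnion]
      refine ⟨(loB, hiB), ?_, ?_⟩
      · rw [Finset.mem_filter]; exact ⟨hBmem, hcovB2⟩
      · simpa only [lwall, rwall] using hw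
    have hne := (lwall_lt_rwall (Tc := Tc) hB).ne
    calc 2 = ({lwall Tc loB hiB, rwall n Tc loB hiB} : Finset ℤ).card :=
          (Finset.card_pair hne).symm
      _ ≤ _ := Finset.card_le_card hsub


lemma hasLabelJ_val {n j : ℕ} {T0 : ℤ × ℤ} {x : ℤ × ℤ} {m : ℕ}
    (h : HasLabelJ n j T0 x m) : (m : ℤ) = 1 + T0.2 - x.2 := by
  obtain ⟨u, v, hu, hv, hx, hm⟩ := h
  subst hm
  rw [hx]
  simp only [rectPt]
  push_cast
  ring

lemma arisesJ_extract {n j : ℕ} {T0 : ℤ × ℤ} {c d : ℕ} {k : ℤ}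
    (hj1 : 1 ≤ j) (hjn : j ≤ n) (h : ArisesJ n j T0 c d k) :
    d = c + 1 + (n - j) ∧ k = T0.1 + T0.2 - 2 * ((c : ℤ) - 1) := by
  obtain ⟨hcd, p, hset, hlab⟩ := h
  have hmem := Set.ext_iff.mp hset
  have hpR : p ∈ {y : ℤ × ℤ | ∃ t : ℕ, t ≤ d - c - 1 ∧ y = (p.1 + (t : ℤ), p.2 - (t : ℤ))} :=
    ⟨0, Nat.zero_le _, by simp⟩
  obtain ⟨hpk, hprect⟩ := (hmem p).mpr hpR
  obtain ⟨u0, v0, hu0, hv0, hpe⟩ := hprect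
  have hkey : k = T0.1 + T0.2 - 2 * (u0 : ℤ) := by
    rw [← hpk, hpe]; simp only [keyOf, rectPt]; ring
  have hp1 : p.1 = T0.1 - (u0 : ℤ) + (v0 : ℤ) := by rw [hpe]; rfl
  have hp2 : p.2 = T0.2 - (u0 : ℤ) - (v0 : ℤ) := by rw [hpe]; rfl
  have hrowmem : ∀ v : ℕ, v < n + 1 - j →
      rectPt T0 u0 v ∈ {x : ℤ × ℤ | keyOf x = k ∧ InRectJ n j T0 x} := by
    intro v hv
    refine ⟨?_, u0, v, hu0, hv, rfl⟩
    rw [hkey]; simp only [keyOf, rectPt]; push_cast; ring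
  have hv00 : v0 = 0 := by
    obtain ⟨t, ht, hq⟩ := (hmem _).mp (hrowmem 0 (by omega))
    have h1 : (rectPt T0 u0 0).1 = p.1 + (t : ℤ) := by rw [hq]
    simp only [rectPt] at h1
    rw [hp1] at h1
    push_cast at h1
    have : (v0 : ℤ) + (t : ℤ) = 0 := by linarith
    omega
  have hle1 : n - j ≤ d - c - 1 := by
    obtain ⟨t, ht, hq⟩ := (hmem _).mp (hrowmem (n - j) (by omega))
    have h1 : (rectPt T0 u0 (n - j)).1 = p.1 + (t : ℤ) := by rw [hq]
    simp only [rectPt] at h1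
    rw [hp1] at h1
    have : ((n - j : ℕ) : ℤ) = (v0 : ℤ) + (t : ℤ) := by linarith
    omega
  have hle2 : d - c - 1 ≤ n - j := by
    have hsR : (p.1 + ((d - c - 1 : ℕ) : ℤ), p.2 - ((d - c - 1 : ℕ) : ℤ)) ∈
        {y : ℤ × ℤ | ∃ t : ℕ, t ≤ d - c - 1 ∧ y = (p.1 + (t : ℤ), p.2 - (t : ℤ))} :=
      ⟨d - c - 1, le_rfl, rfl⟩
    obtain ⟨-, u1, v1, hu1, hv1, hse⟩ := (hmem _).mpr hsR
    have h1 : p.1 + ((d - c - 1 : ℕ) : ℤ) = T0.1 - (u1 : ℤ) + (v1 : ℤ) := by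
      have := congrArg Prod.fst hse; simpa [rectPt] using this
    have h2 : p.2 - ((d - c - 1 : ℕ) : ℤ) = T0.2 - (u1 : ℤ) - (v1 : ℤ) := by
      have := congrArg Prod.snd hse; simpa [rectPt] using this
    rw [hp1] at h1
    rw [hp2] at h2
    have e2 : (v1 : ℤ) = ((d - c - 1 : ℕ) : ℤ) + (v0 : ℤ) := by linarith
    omega
  have hl0 := hlab 0 (Nat.zero_le _)
  have hp0 : ((p.1 + ((0 : ℕ) : ℤ), p.2 - ((0 : ℕ) : ℤ)) : ℤ × ℤ) = p := by simp
  rw [hp0] at hl0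
  have hcl := hasLabelJ_val hl0
  push_cast at hcl
  rw [hp2, hv00] at hcl
  push_cast at hcl
  exact ⟨by omega, by rw [hkey]; linarith⟩

/-- for a point `x` of `D(P)` (resp. `D(j)`) with label `m ≥ 2`, for no
`d` with `m < d ≤ n+1` do both `α_{m-1,d}` and `α_{m,d}` belong to `S(x)`. -/
theorem stmt10 (n : ℕ) (hn : 1 ≤ n) :
    (∀ (P : PartialQuiver n) (Tc : ℕ × ℕ → ℤ × ℤ), IsRealization n P Tc →
      ∀ z : ℤ, IsCentralLine n P Tc z →
      ∀ x ∈ pointsD n P Tc, ∀ m : ℕ, HasLabel n P Tc x m → 2 ≤ m →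
      ∀ d : ℕ, m < d → d ≤ n + 1 →
        ¬ ((m - 1, d) ∈ Sx n P Tc z x m ∧ (m, d) ∈ Sx n P Tc z x m)) ∧
    (∀ j : ℕ, 1 ≤ j → j ≤ n → ∀ T0 : ℤ × ℤ, ∀ x ∈ pointsDJ n j T0, ∀ m : ℕ,
      HasLabelJ n j T0 x m → 2 ≤ m → ∀ d : ℕ, m < d → d ≤ n + 1 →
        ¬ ((m - 1, d) ∈ SxJ n j T0 x m ∧ (m, d) ∈ SxJ n j T0 x m)) := by
  constructor
  · -- Part 1 : the diagram `D(P)`.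
    intro P Tc hreal z hz x hx m hml hm2 d hmd hdn
    rintro ⟨h1, h2⟩
    simp only [Sx, S1x, S2x, Set.mem_union, Set.mem_setOf_eq] at h1 h2
    have h1' : ∃ kA, keyOf x < kA ∧ ArisesFrom n P Tc z (m - 1) d kA := by
      rcases h1 with (h | h) | h
      · exact h
      · exact absurd h.2 (by omega)
      · exact absurd h.1 (by omega)
    obtain ⟨kA, hkA, loA, hiA, hA, harA⟩ := h1'
    obtain ⟨edA, ekA, ebA, etA, ecLA, ecRA⟩ := arisesY_extract hreal hA harA
    have hb1A := hA.1; have hb2A := hA.2.1; have hb3A := hA.2.2.1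
    have hm1c : ((m - 1 : ℕ) : ℤ) = (m : ℤ) - 1 := by omega
    have hhandleB : ∀ kB : ℤ, ArisesFrom n P Tc z m d kB → False := by
      intro kB harB0
      obtain ⟨loB, hiB, hB, harB⟩ := harB0
      obtain ⟨edB, ekB, ebB, etB, ecLB, ecRB⟩ := arisesY_extract hreal hB harB
      have hb1B := hB.1; have hb2B := hB.2.1; have hb3B := hB.2.2.1
      have hBA : hiB = hiA + 1 := by omega
      have hadj : hiA + 1 = loB := by
        have hdis : hiA < loB := comp_disjoint hB hA (by omega)
        omega
      have hsing : loB = hiB := by omega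
      have hg := glue hreal hB hA hadj
      have hconst := hg.1
      have hcellT : IsCellRow n P Tc (keyT Tc loB hiB) := by
        have := cellRow_of_comp (Tc := Tc) hB 0 (Nat.zero_le _)
        simpa using this
      have hcellBot : IsCellRow n P Tc (botK Tc loB hiB) := by
        have := cellRow_of_comp (Tc := Tc) hB (loB - 2) le_rfl
        have hc2 : ((loB - 2 : ℕ) : ℤ) = (loB : ℤ) - 2 := by omega
        rw [hc2] at this
        simpa only [botK] using this
      have hzT : z ≠ keyT Tc loB hiB := fun he => (hz.2.2.1 _ hcellT) he.symm
      have hbKB := botK_le_keyT (Tc := Tc) hB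
      have hbKA := botK_le_keyT (Tc := Tc) hA
      have hBAc : (hiB : ℤ) = (hiA : ℤ) + 1 := by omega
      rcases opp_type hA hB.2.2.2.1 hadj with ⟨hBL, hAR⟩ | ⟨hBR, hAL⟩
      · -- B of type L, A of type R
        have hgl := hg.2.2.2.2.2.2.2.1 hBL
        have hkBA : kB = kA - 2 := by
          rw [ekB, ekA, hm1c, hconst, hgl.2.1]; ring
        have hzout : z < botK Tc loB hiB ∨ keyT Tc loB hiB < z := by
          by_contra hcon
          push_neg at hcon
          obtain ⟨hz1, hz2⟩ := hcon
          have hz3 : z < keyT Tc loB hiB := lt_of_le_of_ne hz2 hzT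
          have hzkB : z < kB := (ecLB hBL).mpr hz3
          have hzkA : kA ≤ z := by
            by_contra hc
            push_neg at hc
            have := (ecRA hAR).mp hc
            rw [hgl.1] at this
            linarith
          linarith
        have hpar := parity_rows_L hreal hA hB hadj hsing hBL
        have hcell2 : IsCellRow n P Tc (keyT Tc loA hiA + 2) := by
          have hu : loB - loA - 1 ≤ loB - 2 := by omega
          have := cellRow_of_comp (Tc := Tc) hB (loB - loA - 1) hu
          have heq : keyT Tc loB hiB - 2 * ((loB - loA - 1 : ℕ) : ℤ)
              = keyT Tc loA hiA + 2 := by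
            have hc3 : ((loB - loA - 1 : ℕ) : ℤ) = (loB : ℤ) - loA - 1 := by omega
            rw [hc3]
            have hbb := hgl.1
            simp only [botK] at hbb
            linarith
          rw [heq] at this
          exact this
        have hr2le : keyT Tc loA hiA + 2 ≤ keyT Tc loB hiB := hgl.2.2
        have hr1le : botK Tc loB hiB ≤ keyT Tc loA hiA + 2 := by
          rw [← hgl.1]; linarith
        have hev : Even (boxCount n P Tc (botK Tc loB hiB))
            ↔ Even (boxCount n P Tc (keyT Tc loA hiA + 2)) := by
          rcases hzout with hlt | hlt
          · exact hz.2.2.2.1 _ _ hcellBot hcell2 (by linarith) (by linarith)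
          · exact hz.2.2.2.2.1 _ _ hcellBot hcell2 (by linarith) (by linarith)
        simp only [boxCount] at hev
        rw [Nat.even_iff, Nat.even_iff] at hev
        omega
      · -- B of type R, A of type L
        have hgr := hg.2.2.2.2.2.2.2.2 hBR
        have hkBA : kB = kA := by
          rw [ekB, ekA, hm1c, hconst, hgr.2.2.2.2, hBAc]; ring
        have hzout : z < botK Tc loB hiB ∨ keyT Tc loB hiB < z := by
          by_contra hcon
          push_neg at hcon
          obtain ⟨hz1, hz2⟩ := hcon
          have hz3 : z < keyT Tc loB hiB := lt_of_le_of_ne hz2 hzT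
          have hzkA : z < kA := (ecLA hAL).mpr (by rw [hgr.1]; exact hz3)
          have hzkB : kB ≤ z := by
            by_contra hc
            push_neg at hc
            have := (ecRB hBR).mp hc
            linarith
          linarith
        have hpar := parity_rows_R hreal hA hB hadj hsing hBR
        have hev : Even (boxCount n P Tc (keyT Tc loB hiB))
            ↔ Even (boxCount n P Tc (botK Tc loB hiB)) := by
          rcases hzout with hlt | hlt
          · exact hz.2.2.2.1 _ _ hcellT hcellBot (by linarith) (by linarith)
          · exact hz.2.2.2.2.1 _ _ hcellT hcellBot (by linarith) (by linarith)
        simp only [boxCount] at hev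
        rw [Nat.even_iff, Nat.even_iff] at hev
        omega
    rcases h2 with (⟨kB, hkB, harB0⟩ | ⟨harB0, -⟩) | ⟨-, -, c', hc'm, harC0⟩
    · exact hhandleB kB harB0
    · exact hhandleB (keyOf x) harB0
    · obtain ⟨loC, hiC, hC, harC⟩ := harC0
      obtain ⟨edC, ekC, -, -, -, -⟩ := arisesY_extract hreal hC harC
      have hb1C := hC.1; have hb2C := hC.2.1; have hb3C := hC.2.2.1
      have hCA : hiC ≤ hiA := by omega
      rcases eq_or_lt_of_le hCA with heq | hlt
      · have hu := comp_unique hC hA hC.2.1 le_rfl (by omega) (by omega)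
        obtain ⟨e1, e2⟩ := hu
        subst e1; subst e2
        have hceq : c' = m - 1 := by omega
        have hcast : ((c' : ℕ) : ℤ) = ((m - 1 : ℕ) : ℤ) := by omega
        have : keyOf x = kA := by
          rw [ekC, ekA, hcast]
        linarith
      · have hdis : hiC < loA := comp_disjoint hA hC hlt
        have hch := chain hreal (loA - hiC) loA hiA loC hiC le_rfl hA hC hdis
        have hee : (hiA : ℤ) - (hiC : ℤ) = ((m - 1 : ℕ) : ℤ) - (c' : ℤ) := by omega
        have hcc := hch.1
        have hdd := hch.2.2.2.2.2.2
        linarith [ekA, ekC]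
  · -- Part 2 : the diagram `D(j)`.
    intro j hj1 hjn T0 x hx m hml hm2 d hmd hdn
    rintro ⟨h1, h2⟩
    simp only [SxJ, S1xJ, S2xJ, Set.mem_union, Set.mem_setOf_eq] at h1 h2
    have h1' : ∃ kA, keyOf x < kA ∧ ArisesJ n j T0 (m - 1) d kA := by
      rcases h1 with (h | h) | h
      · exact h
      · exact absurd h.2 (by omega)
      · exact absurd h.1 (by omega)
    obtain ⟨kA, hkA, harA⟩ := h1'
    obtain ⟨edA, ekA⟩ := arisesJ_extract hj1 hjn harA
    rcases h2 with (⟨kB, hkB, harB⟩ | ⟨harB, -⟩) | ⟨-, -, c', hc', harC⟩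
    · obtain ⟨edB, -⟩ := arisesJ_extract hj1 hjn harB
      omega
    · obtain ⟨edB, -⟩ := arisesJ_extract hj1 hjn harB
      omega
    · obtain ⟨edC, ekC⟩ := arisesJ_extract hj1 hjn harC
      have hcast : ((c' : ℕ) : ℤ) = ((m - 1 : ℕ) : ℤ) := by omega
      have : keyOf x = kA := by rw [ekC, ekA, hcast]
      linarith

end Paper
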